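/- In any G⁰-algebra, (x ≻ z) ∨ (y ≻ z) ≤ (x ∧ y) ≻ z. -/

import Mathlib

/-!
With `m = ∼(∼x ∨ ∼y)` we have `m ≤ ∼∼x` by antitonicity of `· ≻ 0`, and `∼∼x ≤ x ∨ z`
because `x ≤ x ∨ z` and `0 ≤ x ∨ z`. By exchange (axiom `g4`), `m ≤ (x ≻ z) ≻ z` turns into
`x ≻ z ≤ m ≻ z`; likewise `y ≻ z ≤ m ≻ z`, and `∨` is a least upper bound.
-/

class GAlgebra (A : Type*) where
  succ : A → A → A
  one : A
  g1 : ∀ x, succ one x = x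
  g2 : ∀ x, succ x one = one
  g3 : ∀ x y, succ (succ x y) y = succ (succ y x) x
  g4 : ∀ x y z, succ x (succ y z) = one → succ y (succ x z) = one

open GAlgebra

local infixr:70 " ≻ " => GAlgebra.succ

class G0Algebra (A : Type*) extends GAlgebra A where
  zero : A
  g17 : ∀ x, succ zero x = one

open G0Algebra

section GAlgebra

variable {A : Type*} [GAlgebra A]

lemma succ_self (x : A) : x ≻ x = (one : A) := by
  simpa only [g2, g1] using (g3 x (one : A)).symm

lemma succ_join_left (a b : A) : a ≻ ((a ≻ b) ≻ b) = (one : A) :=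
  g4 _ _ _ (succ_self _)

lemma succ_join_right (a b : A) : b ≻ ((a ≻ b) ≻ b) = (one : A) :=
  g4 _ _ _ (by rw [succ_self, g2])

lemma join_eq_of_succ_eq_one {a b : A} (h : a ≻ b = (one : A)) : (b ≻ a) ≻ a = b := by
  simpa only [h, g1] using (g3 a b).symm

lemma succ_trans {a b c : A} (hab : a ≻ b = (one : A)) (hbc : b ≻ c = (one : A)) :
    a ≻ c = (one : A) := by
  rw [← join_eq_of_succ_eq_one hbc]
  exact g4 _ _ _ (by rw [hab, g2])

lemma succ_antitone {a b : A} (c : A) (h : a ≻ b = (one : A)) :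
    (b ≻ c) ≻ (a ≻ c) = (one : A) :=
  g4 _ _ _ (succ_trans h (succ_join_left b c))

lemma join_succ {a b c : A} (ha : a ≻ c = (one : A)) (hb : b ≻ c = (one : A)) :
    ((a ≻ b) ≻ b) ≻ c = (one : A) := by
  rw [← join_eq_of_succ_eq_one hb]
  exact succ_antitone b (succ_antitone b ha)

end GAlgebra

section G0Algebra

variable {A : Type*} [G0Algebra A]

lemma neg_neg_succ_join (x z : A) :
    ((x ≻ (zero : A)) ≻ (zero : A)) ≻ ((x ≻ z) ≻ z) = (one : A) :=
  join_succ (succ_join_left x z) (g17 _)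

lemma succ_le_succ_of_le_neg_neg {m : A} (x z : A)
    (hm : m ≻ ((x ≻ (zero : A)) ≻ (zero : A)) = (one : A)) :
    (x ≻ z) ≻ (m ≻ z) = (one : A) :=
  g4 _ _ _ (succ_trans hm (neg_neg_succ_join x z))

end G0Algebra

theorem stmt13 {A : Type*} [G0Algebra A] (x y z : A)
    (neg : A → A) (hneg : ∀ a : A, neg a = a ≻ (zero : A))
    (sup : A → A → A) (hsup : ∀ a b : A, sup a b = (a ≻ b) ≻ b)
    (inf : A → A → A) (hinf : ∀ a b : A, inf a b = neg (sup (neg a) (neg b))) :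
    (sup (x ≻ z) (y ≻ z)) ≻ ((inf x y) ≻ z) = (one : A) := by
  simp only [hinf, hsup, hneg]
  exact join_succ
    (succ_le_succ_of_le_neg_neg x z (succ_antitone _ (succ_join_left _ _)))
    (succ_le_succ_of_le_neg_neg y z (succ_antitone _ (succ_join_right _ _)))
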